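/- Let X be a finite connected bipartite multigraph with deg(x) ≥ 3 for all x. Then for all vertices x, y with d(x,y) ≡ δ mod 2 (δ ∈ {0,1}), lim_{n→∞} q^(2n+δ)(x,y) = 2·deg(y)/|E(X)|. -/

import Mathlib

/-!
Let `Q` be the transition matrix of the non-backtracking walk on oriented edges. Reversing
edges transposes `Q`, so `Q` is doubly stochastic. The set of edges reachable from `e` is closed
under steps, hence by double stochasticity also under backward steps; with two continuations at
every edge (degree `≥ 3`) this lets the walk turn around, so `Q` is irreducible. Color every
edge by the color of its head: `Q` swaps the two classes, each of size `|E|/2`, and `Q²`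
restricted to a class is doubly stochastic. Degree `≥ 3` also yields closed walks of lengths
`b` and `b + 2`, making this restriction primitive. Powers of a primitive doubly stochastic
matrix converge to the uniform matrix (the spread of a column contracts, Doeblin), so
`q_E^(2n)(e,f) → 2/|E|` inside a class and `q_E^(2n+1)(e,f) → 2/|E|` across classes; summing over
the `deg x · deg y` pairs of edges with heads `x` and `y` gives the limit `2 deg y / |E|`.
-/

open scoped BigOperators
open Filter

/-- A multigraph given by its set of *oriented* edges. Each oriented edge `e`
has an initial vertex `tail e = e⁻`, a terminal vertex `head e = e⁺`, and a
reversal `bar e = ě` with `ě ≠ e` (loops are counted twice). Local finiteness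
is built in. -/
structure Multigraph where
  V : Type
  E : Type
  tail : E → V
  head : E → V
  bar : E → E
  bar_bar : ∀ e, bar (bar e) = e
  bar_ne : ∀ e, bar e ≠ e
  head_bar : ∀ e, head (bar e) = tail e
  locFin : ∀ x, {e | tail e = x}.Finite

namespace Multigraph
variable (G : Multigraph)

/-- The degree of a vertex: the number of oriented edges emanating from it. -/
noncomputable def deg (x : G.V) : ℕ := (G.locFin x).toFinset.card

/-- `e → f`: `f` may follow `e` in a non-backtracking walk. -/
def Step (e f : G.E) : Prop := G.tail f = G.head e ∧ f ≠ G.bar e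

/-- `e ⇒ f`: there is a non-backtracking walk from `e` to `f`. -/
def Reach : G.E → G.E → Prop := Relation.ReflTransGen G.Step

/-- One-step transition probabilities of the edge non-backtracking random walk. -/
noncomputable def q (e f : G.E) : ℝ :=
  open Classical in
  if G.Step e f then 1 / ((G.deg (G.head e) : ℝ) - 1) else 0

/-- `n`-step transition probabilities `q_E^(n)` of the edge NBRW. -/
noncomputable def qn (G : Multigraph) : ℕ → G.E → G.E → ℝ
  | 0, e, f => open Classical in if e = f then 1 else 0
  | n + 1, e, f => ∑' g : G.E, qn G n e g * G.q g f

/-- Vertex NBRW transition probabilities: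
`q^(n)(x,y) = (1/deg x) ∑_{e⁺=x, f⁺=y} q_E^(n)(e,f)`. -/
noncomputable def qv (n : ℕ) (x y : G.V) : ℝ :=
  (1 / (G.deg x : ℝ)) *
    ∑' (e : {e : G.E // G.head e = x}) (f : {f : G.E // G.head f = y}),
      G.qn n e.1 f.1

def Adj (x y : G.V) : Prop := ∃ e : G.E, G.tail e = x ∧ G.head e = y

def Connected : Prop := ∀ x y : G.V, Relation.ReflTransGen G.Adj x y

/-- There is a walk of length `n` from `x` to `y`. -/
def WalkLen (G : Multigraph) : ℕ → G.V → G.V → Prop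
  | 0, x, y => x = y
  | n + 1, x, y => ∃ z, G.Adj x z ∧ WalkLen G n z y

/-- Graph distance. -/
noncomputable def dist (x y : G.V) : ℕ := sInf {n | G.WalkLen n x y}

/-- A cycle: a nonempty list of distinct oriented edges, with distinct initial
vertices, such that consecutive edges (cyclically) form non-backtracking steps. -/
def IsCycle (l : List G.E) : Prop :=
  l ≠ [] ∧ l.Nodup ∧ (l.map G.tail).Nodup ∧ List.Chain' G.Step (l ++ l.take 1)

/-- Small cycles are dense: some radius `R` works for every ball. -/
def SmallCyclesDense : Prop :=
  ∃ R : ℕ, ∀ x : G.V, ∃ l : List G.E, G.IsCycle l ∧ ∀ e ∈ l, G.dist x (G.tail e) ≤ R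

/-- `X` is a (finite) cycle graph. -/
def IsCycleGraph : Prop := (Set.univ : Set G.V).Finite ∧ ∀ x, G.deg x = 2

def Bipartite : Prop := ∃ c : G.V → Bool, ∀ e : G.E, c (G.tail e) ≠ c (G.head e)

end Multigraph

open Finset Matrix

theorem AddSubmonoid.nat_mem_of_mul_self_le {S : AddSubmonoid ℕ} {a n : ℕ} (ha : a ∈ S)
    (ha' : a + 1 ∈ S) (hn : a * a ≤ n) : n ∈ S := by
  rcases Nat.eq_zero_or_pos a with rfl | hpos
  · simpa using S.nsmul_mem ha' n
  have hmod : n % a ≤ n / a :=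
    (Nat.mod_lt n hpos).le.trans ((Nat.le_div_iff_mul_le hpos).mpr hn)
  have hsplit : n = (n / a - n % a) • a + (n % a) • (a + 1) := by
    simp only [smul_eq_mul]
    have := Nat.div_add_mod' n a
    zify [hmod] at this ⊢
    linarith
  rw [hsplit]
  exact S.add_mem (S.nsmul_mem ha _) (S.nsmul_mem ha' _)

def AddSubmonoid.intDiffs (S : AddSubmonoid ℕ) : AddSubgroup ℤ where
  carrier := {z | ∃ a ∈ S, ∃ b ∈ S, z = a - b}
  add_mem' := by
    rintro _ _ ⟨a, ha, b, hb, rfl⟩ ⟨c, hc, d, hd, rfl⟩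
    exact ⟨a + c, S.add_mem ha hc, b + d, S.add_mem hb hd, by push_cast; ring⟩
  zero_mem' := ⟨0, S.zero_mem, 0, S.zero_mem, rfl⟩
  neg_mem' := by
    rintro _ ⟨a, ha, b, hb, rfl⟩
    exact ⟨b, hb, a, ha, by ring⟩

theorem tendsto_zero_of_antitone_of_le_mul {D : ℕ → ℝ} (hanti : Antitone D)
    (hnonneg : ∀ n, 0 ≤ D n) {k : ℕ} {c : ℝ} (hc : c < 1) (hD : ∀ n, D (n + k) ≤ c * D n) :
    Tendsto D atTop (nhds 0) := by
  have hlim : Tendsto D atTop (nhds (⨅ n, D n)) :=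
    tendsto_atTop_ciInf hanti ⟨0, by rintro _ ⟨n, rfl⟩; exact hnonneg n⟩
  have hle : (⨅ n, D n) ≤ c * ⨅ n, D n :=
    le_of_tendsto_of_tendsto' (hlim.comp (tendsto_add_atTop_nat k))
      (hlim.const_mul c) hD
  have hL : 0 ≤ ⨅ n, D n := le_ciInf hnonneg
  rwa [show (⨅ n, D n) = 0 by nlinarith] at hlim

section Spread

variable {ι : Type*} [Fintype ι] [Nonempty ι]

noncomputable def spread (v : ι → ℝ) : ℝ := univ.sup' univ_nonempty v - univ.inf' univ_nonempty v

theorem spread_nonneg (v : ι → ℝ) : 0 ≤ spread v := by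
  obtain ⟨i⟩ := ‹Nonempty ι›
  exact sub_nonneg.mpr ((inf'_le v (mem_univ i)).trans (le_sup' v (mem_univ i)))

theorem abs_sub_inv_card_le_spread {v : ι → ℝ} (hv : ∑ i, v i = 1) (j : ι) :
    |v j - (Fintype.card ι : ℝ)⁻¹| ≤ spread v := by
  have hcard : (0 : ℝ) < Fintype.card ι := by exact_mod_cast Fintype.card_pos
  have hlo : univ.inf' univ_nonempty v ≤ (Fintype.card ι : ℝ)⁻¹ := by
    have := card_nsmul_le_sum univ v (univ.inf' univ_nonempty v) fun i _ => inf'_le v (mem_univ i)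
    rw [card_univ, nsmul_eq_mul, hv] at this
    rw [← one_div, le_div_iff₀ hcard]
    linarith
  have hhi : (Fintype.card ι : ℝ)⁻¹ ≤ univ.sup' univ_nonempty v := by
    have := sum_le_card_nsmul univ v (univ.sup' univ_nonempty v) fun i _ => le_sup' v (mem_univ i)
    rw [card_univ, nsmul_eq_mul, hv] at this
    rw [← one_div, div_le_iff₀ hcard]
    linarith
  have := inf'_le v (mem_univ j)
  have := le_sup' v (mem_univ j)
  rw [spread, abs_le]
  constructor <;> linarith

variable [DecidableEq ι]

/-- Doeblin's contraction: each row of `P` contains the common part `ε • δ_g`. -/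
theorem spread_mulVec_le {P : Matrix ι ι ℝ} (hP : P ∈ Matrix.rowStochastic ℝ ι) {g : ι}
    {ε : ℝ} (hε : ∀ i, ε ≤ P i g) (v : ι → ℝ) :
    spread (P *ᵥ v) ≤ (1 - ε) * spread v := by
  set M := univ.sup' univ_nonempty v
  set m := univ.inf' univ_nonempty v
  have hnn : ∀ i j, 0 ≤ P i j := fun _ _ => Matrix.nonneg_of_mem_rowStochastic hP
  have hmv : ∀ i, (P *ᵥ v) i = M - ∑ j, P i j * (M - v j) := fun i => by
    simp [Matrix.mulVec, dotProduct, mul_sub, ← sum_mul, Matrix.sum_row_of_mem_rowStochastic hP]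
  have hvm : ∀ i, (P *ᵥ v) i = m + ∑ j, P i j * (v j - m) := fun i => by
    simp [Matrix.mulVec, dotProduct, mul_sub, ← sum_mul, Matrix.sum_row_of_mem_rowStochastic hP]
  have hMv : ∀ j, 0 ≤ M - v j := fun j => sub_nonneg.mpr (le_sup' v (mem_univ j))
  have hvm' : ∀ j, 0 ≤ v j - m := fun j => sub_nonneg.mpr (inf'_le v (mem_univ j))
  have hupper : ∀ i, (P *ᵥ v) i ≤ M - ε * (M - v g) := fun i => by
    rw [hmv]
    have := single_le_sum (fun j _ => mul_nonneg (hnn i j) (hMv j)) (mem_univ g)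
    nlinarith [mul_le_mul_of_nonneg_right (hε i) (hMv g)]
  have hlower : ∀ i, m + ε * (v g - m) ≤ (P *ᵥ v) i := fun i => by
    rw [hvm]
    have := single_le_sum (fun j _ => mul_nonneg (hnn i j) (hvm' j)) (mem_univ g)
    nlinarith [mul_le_mul_of_nonneg_right (hε i) (hvm' g)]
  have := sup'_le univ_nonempty _ fun i _ => hupper i
  have := le_inf' univ_nonempty _ fun i _ => hlower i
  rw [spread, spread]
  linarith

end Spread

namespace Matrix

variable {ι : Type*} [Fintype ι] [DecidableEq ι]

theorem pow_add_apply_pos {A : Matrix ι ι ℝ} (hA : ∀ i j, 0 ≤ A i j) {m n : ℕ} {i j k : ι}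
    (hij : 0 < (A ^ m) i j) (hjk : 0 < (A ^ n) j k) : 0 < (A ^ (m + n)) i k := by
  rw [pow_add, mul_apply]
  exact (mul_pos hij hjk).trans_le <| single_le_sum
    (fun l _ => mul_nonneg (pow_apply_nonneg hA m i l) (pow_apply_nonneg hA n l k)) (mem_univ j)

def returnTimes {A : Matrix ι ι ℝ} (hA : ∀ i j, 0 ≤ A i j) (i : ι) : AddSubmonoid ℕ where
  carrier := {n | 0 < (A ^ n) i i}
  add_mem' := pow_add_apply_pos hA
  zero_mem' := by simp

@[simp]
theorem mem_returnTimes {A : Matrix ι ι ℝ} (hA : ∀ i j, 0 ≤ A i j) {i : ι} {n : ℕ} :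
    n ∈ returnTimes hA i ↔ 0 < (A ^ n) i i := Iff.rfl

theorem isPrimitive_of_mem_returnTimes {A : Matrix ι ι ℝ} (hA : ∀ i j, 0 ≤ A i j)
    (hconn : ∀ i j, ∃ k, 0 < (A ^ k) i j) {i₀ : ι} {a : ℕ} (ha : a ∈ returnTimes hA i₀)
    (ha' : a + 1 ∈ returnTimes hA i₀) : A.IsPrimitive := by
  choose s hs using fun i => hconn i i₀
  choose t ht using fun j => hconn i₀ j
  set B := univ.sup s + univ.sup t
  refine ⟨hA, B + a * a + 1, by omega, fun i j => ?_⟩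
  have hsi : s i ≤ univ.sup s := le_sup (mem_univ i)
  have htj : t j ≤ univ.sup t := le_sup (mem_univ j)
  have hmid : B + a * a + 1 - s i - t j ∈ returnTimes hA i₀ :=
    AddSubmonoid.nat_mem_of_mul_self_le ha ha' (by omega)
  have := pow_add_apply_pos hA (pow_add_apply_pos hA (hs i) hmid) (ht j)
  rwa [show s i + (B + a * a + 1 - s i - t j) + t j = B + a * a + 1 by omega] at this

/-- The mass staying inside `p` is the same whether counted by rows or by columns, so no mass
can enter `p` when none leaves it. -/
theorem apply_eq_zero_of_not_of_mem_doublyStochastic {M : Matrix ι ι ℝ}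
    (hM : M ∈ doublyStochastic ℝ ι) {p : ι → Prop} [DecidablePred p]
    (hp : ∀ i j, p i → ¬ p j → M i j = 0) {i j : ι} (hi : ¬ p i) (hj : p j) : M i j = 0 := by
  set s := univ.filter p
  have hnn : ∀ i j, 0 ≤ M i j := fun _ _ => nonneg_of_mem_doublyStochastic hM
  have hrow : ∀ i ∈ s, ∑ j ∈ s, M i j = 1 := fun i hi => by
    rw [← sum_row_of_mem_doublyStochastic hM i, ← sum_filter_add_sum_filter_not univ p,
      sum_eq_zero (s := univ.filter (¬ p ·)) fun j hj => hp i j (by simpa [s] using hi)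
        (by simpa using hj), add_zero]
  have hcol : ∀ j ∈ s, ∑ i ∈ s, M i j + ∑ i ∈ univ.filter (¬ p ·), M i j = 1 := fun j _ => by
    rw [sum_filter_add_sum_filter_not, sum_col_of_mem_doublyStochastic hM]
  have hin : ∑ j ∈ s, ∑ i ∈ univ.filter (¬ p ·), M i j = 0 := by
    have := sum_congr rfl hcol
    rw [sum_add_distrib, sum_comm, sum_congr rfl hrow, add_eq_left] at this
    exact this
  exact (sum_eq_zero_iff_of_nonneg fun i _ => hnn i j).mp
    ((sum_eq_zero_iff_of_nonneg fun j _ => sum_nonneg fun i _ => hnn i j).mp hin j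
      (by simpa [s] using hj)) i (by simpa using hi)

theorem submatrix_val_pow {R : Type*} [Semiring R] {A : Matrix ι ι R} {p : ι → Prop}
    [DecidablePred p] (hA : ∀ i j, p i → ¬ p j → A i j = 0) (n : ℕ) :
    A.submatrix (Subtype.val : Subtype p → ι) (Subtype.val : Subtype p → ι) ^ n
      = (A ^ n).submatrix Subtype.val Subtype.val := by
  induction n with
  | zero => ext i j; simp [one_apply, Subtype.ext_iff]
  | succ n ih =>
    ext i j
    rw [pow_succ', ih, pow_succ', submatrix_apply, mul_apply, mul_apply,
      ← sum_filter_add_sum_filter_not univ p,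
      sum_eq_zero (s := univ.filter (¬ p ·)) fun k hk => by
        rw [hA i k i.2 (by simpa using hk), zero_mul],
      add_zero, ← sum_subtype_eq_sum_filter, subtype_univ]
    rfl

theorem submatrix_val_mem_doublyStochastic {M : Matrix ι ι ℝ} (hM : M ∈ doublyStochastic ℝ ι)
    {p : ι → Prop} [DecidablePred p] (hp : ∀ i j, p i → ¬ p j → M i j = 0) :
    M.submatrix (Subtype.val : Subtype p → ι) (Subtype.val : Subtype p → ι)
      ∈ doublyStochastic ℝ (Subtype p) := by
  refine mem_doublyStochastic_iff_sum.mpr ⟨fun i j => nonneg_of_mem_doublyStochastic hM, ?_, ?_⟩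
  · intro i
    rw [← sum_row_of_mem_doublyStochastic hM i, ← sum_filter_add_sum_filter_not univ p,
      sum_eq_zero (s := univ.filter (¬ p ·)) fun j hj => hp i j i.2 (by simpa using hj),
      add_zero, ← sum_subtype_eq_sum_filter, subtype_univ]
    rfl
  · intro j
    rw [← sum_col_of_mem_doublyStochastic hM j, ← sum_filter_add_sum_filter_not univ p,
      sum_eq_zero (s := univ.filter (¬ p ·)) fun i hi =>
        apply_eq_zero_of_not_of_mem_doublyStochastic hM hp (by simpa using hi) j.2,
      add_zero, ← sum_subtype_eq_sum_filter, subtype_univ]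
    rfl

theorem tendsto_pow_apply_of_isPrimitive {P : Matrix ι ι ℝ} (hP : P ∈ doublyStochastic ℝ ι)
    (hprim : P.IsPrimitive) (i j : ι) :
    Tendsto (fun n => (P ^ n) i j) atTop (nhds (Fintype.card ι : ℝ)⁻¹) := by
  have : Nonempty ι := ⟨i⟩
  have hrow : ∀ k, P ^ k ∈ rowStochastic ℝ ι := fun k =>
    pow_mem (mem_doublyStochastic_iff_mem_rowStochastic_and_mem_colStochastic.mp hP).1 k
  set D : ℕ → ℝ := fun n => spread fun i => (P ^ n) i j
  have hcol : ∀ k n, (fun i => (P ^ (k + n)) i j) = P ^ k *ᵥ fun i => (P ^ n) i j :=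
    fun k n => by ext i; simp [pow_add, mul_apply, mulVec, dotProduct]
  have hanti : Antitone D := antitone_nat_of_succ_le fun n => by
    simpa [D, add_comm n 1, hcol] using
      spread_mulVec_le (hrow 1) (g := j) (fun i => nonneg_of_mem_rowStochastic (hrow 1))
        fun i => (P ^ n) i j
  obtain ⟨k, -, hpos⟩ := hprim.exists_pos_pow
  obtain ⟨i₀, hi₀⟩ := Finite.exists_min fun i => (P ^ k) i j
  have hD : ∀ n, D (n + k) ≤ (1 - (P ^ k) i₀ j) * D n := fun n => by
    simpa [D, add_comm n k, hcol] using spread_mulVec_le (hrow k) hi₀ fun i => (P ^ n) i j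
  have hDlim := tendsto_zero_of_antitone_of_le_mul hanti (fun n => spread_nonneg _)
    (by linarith [hpos i₀ j]) hD
  rw [← tendsto_sub_nhds_zero_iff]
  refine squeeze_zero_norm (fun n => ?_) hDlim
  exact abs_sub_inv_card_le_spread (sum_col_of_mem_doublyStochastic (pow_mem hP n) j) i

end Matrix

namespace Multigraph

variable {G : Multigraph}

theorem tail_bar (e : G.E) : G.tail (G.bar e) = G.head e := by
  rw [← G.head_bar, G.bar_bar]

theorem bar_involutive : Function.Involutive G.bar := G.bar_bar

theorem step_bar_bar_iff {e f : G.E} : G.Step (G.bar f) (G.bar e) ↔ G.Step e f := by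
  simp only [Step, tail_bar, G.head_bar, G.bar_bar]
  exact and_congr eq_comm ne_comm

theorem q_of_step {e f : G.E} (h : G.Step e f) : G.q e f = 1 / ((G.deg (G.head e) : ℝ) - 1) :=
  if_pos h

theorem q_of_not_step {e f : G.E} (h : ¬ G.Step e f) : G.q e f = 0 := if_neg h

theorem q_bar_bar (e f : G.E) : G.q (G.bar f) (G.bar e) = G.q e f := by
  by_cases h : G.Step e f
  · rw [q_of_step h, q_of_step (step_bar_bar_iff.mpr h), G.head_bar, h.1]
  · rw [q_of_not_step h, q_of_not_step (mt step_bar_bar_iff.mp h)]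

noncomputable def nbMatrix (G : Multigraph) : Matrix G.E G.E ℝ := Matrix.of G.q

@[simp]
theorem nbMatrix_apply (e f : G.E) : G.nbMatrix e f = G.q e f := rfl

theorem walkLen_succ_of_adj {n : ℕ} {x y z : G.V} (h : G.WalkLen n x y) (hyz : G.Adj y z) :
    G.WalkLen (n + 1) x z := by
  induction n generalizing x with
  | zero => exact ⟨z, h ▸ hyz, rfl⟩
  | succ n ih =>
    obtain ⟨w, hxw, hw⟩ := h
    exact ⟨w, hxw, ih hw⟩

theorem walkLen_dist (hconn : G.Connected) (x y : G.V) : G.WalkLen (G.dist x y) x y := by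
  refine Nat.sInf_mem (s := {n | G.WalkLen n x y}) ?_
  induction hconn x y with
  | refl => exact ⟨0, rfl⟩
  | tail _ hadj ih =>
    obtain ⟨n, hn⟩ := ih
    exact ⟨n + 1, walkLen_succ_of_adj hn hadj⟩

theorem color_eq_iff_even_of_walkLen {c : G.V → Bool} (hc : ∀ e, c (G.tail e) ≠ c (G.head e))
    {n : ℕ} {x y : G.V} (h : G.WalkLen n x y) : c x = c y ↔ Even n := by
  induction n generalizing x with
  | zero => simp [show x = y from h]
  | succ n ih =>
    obtain ⟨z, ⟨e, rfl, rfl⟩, hz⟩ := h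
    rw [Nat.even_add_one, ← ih hz, Bool.eq_not_of_ne (hc e).symm, Bool.not_eq_iff, not_not]

section Fintype

open scoped Classical

variable [Fintype G.E]

theorem deg_eq_card (x : G.V) : G.deg x = (univ.filter fun e => G.tail e = x).card := by
  rw [deg, Set.Finite.toFinset_ofPred]

theorem card_filter_head_eq (x : G.V) : (univ.filter fun e => G.head e = x).card = G.deg x := by
  rw [deg_eq_card, ← card_map ⟨G.bar, bar_involutive.injective⟩]
  congr 1
  ext e
  simp only [Finset.mem_map, mem_filter, mem_univ, true_and, Function.Embedding.coeFn_mk]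
  exact ⟨by rintro ⟨a, rfl, rfl⟩; exact tail_bar a,
    fun he => ⟨G.bar e, by rw [G.head_bar, he], G.bar_bar e⟩⟩

theorem card_filter_step (e : G.E) :
    (univ.filter (G.Step e)).card = G.deg (G.head e) - 1 := by
  have : univ.filter (G.Step e) = (univ.filter fun f => G.tail f = G.head e).erase (G.bar e) := by
    ext f
    simp [Step, and_comm]
  rw [this, card_erase_of_mem (by simp [tail_bar]), deg_eq_card]

theorem one_lt_deg_head_of_step {e f : G.E} (h : G.Step e f) : 1 < G.deg (G.head e) := by
  have : 0 < (univ.filter (G.Step e)).card := card_pos.mpr ⟨f, by simpa using h⟩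
  rw [card_filter_step] at this
  omega

theorem q_pos_iff {e f : G.E} : 0 < G.q e f ↔ G.Step e f := by
  by_cases h : G.Step e f
  · have : (1 : ℝ) < G.deg (G.head e) := by exact_mod_cast one_lt_deg_head_of_step h
    simp only [q_of_step h, h, iff_true]
    exact one_div_pos.mpr (by linarith)
  · simp [q_of_not_step h, h]

theorem q_nonneg (e f : G.E) : 0 ≤ G.q e f := by
  by_cases h : G.Step e f
  · exact (q_pos_iff.mpr h).le
  · exact (q_of_not_step h).ge

theorem sum_q {e : G.E} (h : 2 ≤ G.deg (G.head e)) : ∑ f, G.q e f = 1 := by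
  have hcast : ((G.deg (G.head e) - 1 : ℕ) : ℝ) = (G.deg (G.head e) : ℝ) - 1 := by
    rw [Nat.cast_sub (by omega), Nat.cast_one]
  have hpos : (0 : ℝ) < (G.deg (G.head e) : ℝ) - 1 := by
    have : (2 : ℝ) ≤ G.deg (G.head e) := by exact_mod_cast h
    linarith
  rw [← sum_filter_add_sum_filter_not univ (G.Step e),
    sum_congr rfl fun f hf => q_of_step (mem_filter.mp hf).2,
    sum_congr rfl fun f hf => q_of_not_step (mem_filter.mp hf).2, sum_const_zero, add_zero,
    sum_const, card_filter_step, nsmul_eq_mul, hcast, mul_one_div_cancel hpos.ne']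

theorem nbMatrix_nonneg (e f : G.E) : 0 ≤ G.nbMatrix e f := q_nonneg e f

theorem qn_eq_pow (n : ℕ) (e f : G.E) : G.qn n e f = (G.nbMatrix ^ n) e f := by
  induction n generalizing f with
  | zero => simp [qn, Matrix.one_apply]
  | succ n ih => simp [qn, tsum_fintype, pow_succ, Matrix.mul_apply, ih]

theorem nbMatrix_mem_doublyStochastic (hdeg : ∀ x, 2 ≤ G.deg x) :
    G.nbMatrix ∈ doublyStochastic ℝ G.E := by
  refine mem_doublyStochastic_iff_sum.mpr
    ⟨fun e f => q_nonneg e f, fun e => sum_q (hdeg _), fun f => ?_⟩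
  simp only [nbMatrix_apply, ← q_bar_bar _ f]
  exact (Equiv.sum_comp (bar_involutive.toPerm _) (G.q (G.bar f))).trans (sum_q (hdeg _))

theorem tendsto_qv {α : Type*} {l : Filter α} {u : α → ℕ} {x y : G.V} {L : ℝ}
    (hx : G.deg x ≠ 0)
    (h : ∀ e f, G.head e = x → G.head f = y →
      Tendsto (fun a => (G.nbMatrix ^ u a) e f) l (nhds L)) :
    Tendsto (fun a => G.qv (u a) x y) l (nhds (G.deg y * L)) := by
  set Ex := univ.filter fun e => G.head e = x
  set Ey := univ.filter fun f => G.head f = y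
  have hsum (n : ℕ) :
      G.qv n x y = (G.deg x : ℝ)⁻¹ * ∑ e ∈ Ex, ∑ f ∈ Ey, (G.nbMatrix ^ n) e f := by
    simp only [qv, one_div, tsum_fintype, qn_eq_pow]
    rw [Finset.sum_subtype Ex (p := (G.head · = x)) (by simp [Ex])]
    congr 1
    refine Fintype.sum_congr _ _ fun e => ?_
    exact (Finset.sum_subtype Ey (p := (G.head · = y)) (by simp [Ey]) _).symm
  have hlim := (tendsto_finsetSum Ex fun e he => tendsto_finsetSum Ey fun f hf =>
    h e f (mem_filter.mp he).2 (mem_filter.mp hf).2).const_mul (G.deg x : ℝ)⁻¹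
  simp only [sum_const, Ex, Ey, card_filter_head_eq, nsmul_eq_mul] at hlim
  convert hlim using 1
  · exact funext fun a => hsum (u a)
  · field_simp

theorem exists_two_ne_of_tail_eq {e : G.E} (h : 3 ≤ G.deg (G.tail e)) :
    ∃ a b, G.tail a = G.tail e ∧ G.tail b = G.tail e ∧ a ≠ e ∧ b ≠ e ∧ a ≠ b := by
  have : 1 < ((univ.filter fun a => G.tail a = G.tail e).erase e).card := by
    rw [card_erase_of_mem (by simp), ← deg_eq_card]
    omega
  obtain ⟨a, b, ha, hb, hab⟩ := one_lt_card_iff.mp this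
  simp only [mem_erase, mem_filter, mem_univ, true_and] at ha hb
  exact ⟨a, b, ha.2, hb.2, ha.1, hb.1, hab⟩

theorem exists_two_steps {e : G.E} (h : 3 ≤ G.deg (G.head e)) :
    ∃ a b, G.Step e a ∧ G.Step e b ∧ a ≠ b := by
  obtain ⟨a, b, ha, hb, hae, hbe, hab⟩ :=
    exists_two_ne_of_tail_eq (e := G.bar e) (by rwa [tail_bar])
  rw [tail_bar] at ha hb
  exact ⟨a, b, ⟨ha, hae⟩, ⟨hb, hbe⟩, hab⟩

/-- The set of edges reachable from `e` is closed under steps; since the walk is doubly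
stochastic it is also closed under backward steps, which lets a walk turn around. -/
theorem reach_bar (hdeg : ∀ x, 3 ≤ G.deg x) (e : G.E) : G.Reach e (G.bar e) := by
  obtain ⟨a, b, ha, hb, hab⟩ := exists_two_steps (hdeg _)
  have hclosed : ∀ g h, G.Reach e g → ¬ G.Reach e h → G.nbMatrix g h = 0 :=
    fun g h hg hh => q_of_not_step fun hs => hh (Relation.ReflTransGen.tail hg hs)
  have hstep : G.Step (G.bar a) b :=
    ⟨by rw [G.head_bar, ha.1, hb.1], by rwa [G.bar_bar, ne_comm]⟩
  have hreach : G.Reach e (G.bar a) := by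
    by_contra hna
    have := Matrix.apply_eq_zero_of_not_of_mem_doublyStochastic
      (nbMatrix_mem_doublyStochastic fun x => (hdeg x).trans' (by norm_num)) hclosed hna
      (Relation.ReflTransGen.single hb)
    exact (q_pos_iff.mpr hstep).ne' this
  exact Relation.ReflTransGen.tail hreach (step_bar_bar_iff.mpr ha)

theorem reach_of_tail_eq_head (hdeg : ∀ x, 3 ≤ G.deg x) {e f : G.E}
    (h : G.tail f = G.head e) : G.Reach e f := by
  by_cases hf : f = G.bar e
  · exact hf ▸ reach_bar hdeg e
  · exact Relation.ReflTransGen.single ⟨h, hf⟩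

theorem reach_of_connected (hconn : G.Connected) (hdeg : ∀ x, 3 ≤ G.deg x) (e f : G.E) :
    G.Reach e f := by
  suffices ∀ y, Relation.ReflTransGen G.Adj (G.head e) y → ∀ f, G.tail f = y → G.Reach e f from
    this _ (hconn _ _) f rfl
  intro y hy
  induction hy with
  | refl => exact fun f hf => reach_of_tail_eq_head hdeg hf
  | tail _ hadj ih =>
    obtain ⟨g, hg, rfl⟩ := hadj
    exact fun f hf => Relation.ReflTransGen.trans (ih g hg) (reach_of_tail_eq_head hdeg hf)

theorem exists_pow_pos_of_reach {e f : G.E} (h : G.Reach e f) :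
    ∃ n, 0 < (G.nbMatrix ^ n) e f := by
  induction h with
  | refl => exact ⟨0, by simp⟩
  | tail _ hs ih =>
    obtain ⟨n, hn⟩ := ih
    exact ⟨n + 1, Matrix.pow_add_apply_pos nbMatrix_nonneg hn (by simpa using q_pos_iff.mpr hs)⟩

theorem color_eq_iff_even_of_pow_pos {c : G.V → Bool}
    (hc : ∀ e, c (G.tail e) ≠ c (G.head e)) {n : ℕ} {e f : G.E}
    (h : 0 < (G.nbMatrix ^ n) e f) : c (G.head e) = c (G.head f) ↔ Even n := by
  induction n generalizing f with
  | zero =>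
    obtain rfl : e = f := by
      by_contra hne
      simp [Matrix.one_apply_ne hne] at h
    simp
  | succ n ih =>
    have hnn := Matrix.pow_apply_nonneg nbMatrix_nonneg n e
    rw [pow_succ, Matrix.mul_apply, sum_pos_iff_of_nonneg fun g _ =>
      mul_nonneg (hnn g) (nbMatrix_nonneg g f)] at h
    obtain ⟨g, -, hg⟩ := h
    have hstep : G.Step g f := q_pos_iff.mp (pos_of_mul_pos_right hg (hnn g))
    have hgf : c (G.head g) ≠ c (G.head f) := hstep.1 ▸ hc f
    rw [Nat.even_add_one, ← ih (pos_of_mul_pos_left hg (nbMatrix_nonneg g f)),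
      Bool.eq_not_of_ne hgf.symm, Bool.eq_not]

/-- At a vertex of degree `≥ 3` the three turns force `ρ v ≡ ρ (bar v) + 1 (mod T)` for every
edge `v`; comparing this along a step `e → w` and the reversed step `bar w → bar e` gives
`2 ≡ 0`. -/
theorem two_mem_of_step_potential (hdeg : ∀ x, 3 ≤ G.deg x) {T : AddSubgroup ℤ} {ρ : G.E → ℤ}
    (hρ : ∀ g h, G.Step g h → ρ h - ρ g - 1 ∈ T) (e : G.E) : (2 : ℤ) ∈ T := by
  have hbar : ∀ v, ρ v - ρ (G.bar v) - 1 ∈ T := fun v => by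
    obtain ⟨u, w, hu, hw, huv, hwv, huw⟩ := exists_two_ne_of_tail_eq (hdeg (G.tail v))
    have h1 := hρ (G.bar u) v ⟨by rw [G.head_bar, hu], by rwa [G.bar_bar, ne_comm]⟩
    have h2 := hρ (G.bar u) w ⟨by rw [G.head_bar, hu, hw], by rwa [G.bar_bar, ne_comm]⟩
    have h3 := hρ (G.bar v) w ⟨by rw [G.head_bar, hw], by rwa [G.bar_bar]⟩
    convert T.add_mem (T.sub_mem h1 h2) h3 using 1
    ring
  obtain ⟨w, -, hw, -, -⟩ := exists_two_steps (hdeg _)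
  convert T.sub_mem (T.sub_mem (T.sub_mem (hbar w) (hbar e)) (hρ e w hw))
    (hρ _ _ (step_bar_bar_iff.mpr hw)) using 1
  ring

theorem exists_mem_returnTimes_add_two (hconn : G.Connected) (hdeg : ∀ x, 3 ≤ G.deg x)
    (e : G.E) : ∃ b ∈ Matrix.returnTimes nbMatrix_nonneg e,
      b + 2 ∈ Matrix.returnTimes nbMatrix_nonneg e := by
  set S := Matrix.returnTimes G.nbMatrix_nonneg e
  have hsub : ∀ {f : G.E} {m n : ℕ}, 0 < (G.nbMatrix ^ m) e f → 0 < (G.nbMatrix ^ n) e f →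
      (m : ℤ) - n ∈ S.intDiffs := fun {f m n} hm hn => by
    obtain ⟨t, ht⟩ := exists_pow_pos_of_reach (reach_of_connected hconn hdeg f e)
    exact ⟨m + t, Matrix.pow_add_apply_pos nbMatrix_nonneg hm ht,
      n + t, Matrix.pow_add_apply_pos nbMatrix_nonneg hn ht, by push_cast; ring⟩
  choose ρ hρ using fun f => exists_pow_pos_of_reach (reach_of_connected hconn hdeg e f)
  have hstep : ∀ g h, G.Step g h → (ρ h : ℤ) - ρ g - 1 ∈ S.intDiffs := fun g h hgh => by
    convert hsub (hρ h) (Matrix.pow_add_apply_pos nbMatrix_nonneg (hρ g) (n := 1)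
      (by simpa using q_pos_iff.mpr hgh)) using 1
    push_cast; ring
  obtain ⟨a, ha, b, hb, hab⟩ := two_mem_of_step_potential hdeg hstep e
  exact ⟨b, hb, by rwa [show b + 2 = a by omega]⟩

theorem two_mul_card_subtype_head_color {c : G.V → Bool} (hc : ∀ e, c (G.tail e) ≠ c (G.head e))
    (b : Bool) : 2 * Fintype.card {e : G.E // c (G.head e) = b} = Fintype.card G.E := by
  have hbar : Fintype.card {e : G.E // c (G.head e) = b}
      = Fintype.card {e : G.E // ¬ c (G.head e) = b} :=
    Fintype.card_congr <| (bar_involutive.toPerm _).subtypeEquiv fun e => by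
      rw [Function.Involutive.coe_toPerm, G.head_bar, Bool.eq_not_of_ne (hc e), Bool.not_eq_iff,
        not_not]
  rw [Fintype.card_subtype_compl] at hbar
  have := Fintype.card_subtype_le fun e : G.E => c (G.head e) = b
  omega

section Limits

variable (hconn : G.Connected) (hdeg : ∀ x, 3 ≤ G.deg x) {c : G.V → Bool}
  (hc : ∀ e, c (G.tail e) ≠ c (G.head e))
include hconn hdeg hc

/-- Restricted to a color class, `Q²` is a primitive doubly stochastic matrix. -/
theorem tendsto_pow_two_mul_apply {e f : G.E} (hef : c (G.head e) = c (G.head f)) :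
    Tendsto (fun n => (G.nbMatrix ^ (2 * n)) e f) atTop
      (nhds (2 / (Fintype.card G.E : ℝ))) := by
  set p : G.E → Prop := fun g => c (G.head g) = c (G.head f)
  have hclosed : ∀ g h, p g → ¬ p h → (G.nbMatrix ^ 2) g h = 0 := fun g h hg hh => by
    by_contra hne
    have := color_eq_iff_even_of_pow_pos hc
      ((Matrix.pow_apply_nonneg nbMatrix_nonneg 2 g h).lt_of_ne' hne)
    exact hh ((this.mpr even_two).symm.trans hg)
  set R := (G.nbMatrix ^ 2).submatrix (Subtype.val : Subtype p → G.E) Subtype.val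
  have hRpow : ∀ n (i j : Subtype p), (R ^ n) i j = (G.nbMatrix ^ (2 * n)) i j := fun n i j => by
    rw [Matrix.submatrix_val_pow hclosed, pow_mul]
    rfl
  have hR : R ∈ doublyStochastic ℝ (Subtype p) := Matrix.submatrix_val_mem_doublyStochastic
    (pow_mem (nbMatrix_mem_doublyStochastic fun x => (hdeg x).trans' (by norm_num)) 2) hclosed
  have hRconn : ∀ i j : Subtype p, ∃ k, 0 < (R ^ k) i j := fun i j => by
    obtain ⟨n, hn⟩ := exists_pow_pos_of_reach (reach_of_connected hconn hdeg i j)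
    obtain ⟨k, rfl⟩ := (color_eq_iff_even_of_pow_pos hc hn).mp (i.2.trans j.2.symm)
    exact ⟨k, by rwa [hRpow, two_mul]⟩
  obtain ⟨b, hb, hb2⟩ := exists_mem_returnTimes_add_two hconn hdeg f
  obtain ⟨a, rfl⟩ := (color_eq_iff_even_of_pow_pos hc hb).mp rfl
  have hprim : R.IsPrimitive := Matrix.isPrimitive_of_mem_returnTimes
    (fun _ _ => nonneg_of_mem_doublyStochastic hR) hRconn (i₀ := ⟨f, rfl⟩) (a := a)
    (by simpa [hRpow, two_mul] using hb) (by simpa [hRpow, mul_add, two_mul] using hb2)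
  have hcard : (Fintype.card (Subtype p) : ℝ)⁻¹ = 2 / Fintype.card G.E := by
    rw [← two_mul_card_subtype_head_color hc (c (G.head f)), Nat.cast_mul, Nat.cast_two,
      div_mul_cancel_left₀ two_ne_zero, Fintype.card_congr (Equiv.refl (Subtype p))]
  simpa [hRpow, hcard] using Matrix.tendsto_pow_apply_of_isPrimitive hR hprim ⟨e, hef⟩ ⟨f, rfl⟩

theorem tendsto_pow_two_mul_add_one_apply {e f : G.E} (hef : c (G.head e) ≠ c (G.head f)) :
    Tendsto (fun n => (G.nbMatrix ^ (2 * n + 1)) e f) atTop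
      (nhds (2 / (Fintype.card G.E : ℝ))) := by
  have hterm : ∀ g, Tendsto (fun n => G.nbMatrix e g * (G.nbMatrix ^ (2 * n)) g f) atTop
      (nhds (G.nbMatrix e g * (2 / (Fintype.card G.E : ℝ)))) := fun g => by
    by_cases hg : G.Step e g
    · have hge : c (G.head g) ≠ c (G.head e) := by
        rw [← hg.1]
        exact (hc g).symm
      have hgf : c (G.head g) = c (G.head f) := by
        rw [Bool.eq_not_of_ne hge, Bool.eq_not_of_ne hef.symm]
      exact (tendsto_pow_two_mul_apply hconn hdeg hc hgf).const_mul _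
    · simp [q_of_not_step hg]
  have hsum := tendsto_finsetSum univ fun g (_ : g ∈ univ) => hterm g
  simp only [← sum_mul, nbMatrix_apply, sum_q ((hdeg _).trans' (by norm_num)),
    one_mul] at hsum
  simpa [pow_succ', Matrix.mul_apply] using hsum

end Limits

end Fintype

end Multigraph

theorem nbrw_limit_bipartite_general (G : Multigraph) [Fintype G.E]
    (hconn : G.Connected) (hdeg : ∀ x, 3 ≤ G.deg x) (hbip : G.Bipartite) :
    ∀ x y : G.V, ∀ δ : ℕ, δ = G.dist x y % 2 →
      Filter.Tendsto (fun n : ℕ => G.qv (2 * n + δ) x y) Filter.atTop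
        (nhds (2 * (G.deg y : ℝ) / (Fintype.card G.E : ℝ))) := by
  classical
  obtain ⟨c, hc⟩ := hbip
  rintro x y δ rfl
  have hpar := Multigraph.color_eq_iff_even_of_walkLen hc (Multigraph.walkLen_dist hconn x y)
  have hedge : ∀ e f, G.head e = x → G.head f = y → Tendsto
      (fun n => (G.nbMatrix ^ (2 * n + G.dist x y % 2)) e f) atTop
      (nhds (2 / (Fintype.card G.E : ℝ))) := by
    rintro e f rfl rfl
    rcases Nat.even_or_odd (G.dist (G.head e) (G.head f)) with heven | hodd
    · simpa [Nat.even_iff.mp heven] using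
        Multigraph.tendsto_pow_two_mul_apply hconn hdeg hc (hpar.mpr heven)
    · rw [Nat.odd_iff.mp hodd]
      exact Multigraph.tendsto_pow_two_mul_add_one_apply hconn hdeg hc
        fun h => Nat.not_even_iff_odd.mpr hodd (hpar.mp h)
  convert Multigraph.tendsto_qv (by have := hdeg x; omega) hedge using 2
  ring

/-- For a finite connected bipartite multigraph with all degrees
`≥ 3`, and `δ ∈ {0,1}` the parity of `d(x,y)`,
`q^(2n+δ)(x,y) → 2 deg(y)/|E(X)|`. -/
theorem nbrw_limit_bipartite (G : Multigraph) [Fintype G.V] [Fintype G.E]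
    (hconn : G.Connected) (hdeg : ∀ x, 3 ≤ G.deg x) (hbip : G.Bipartite) :
    ∀ x y : G.V, ∀ δ : ℕ, δ = G.dist x y % 2 →
      Filter.Tendsto (fun n : ℕ => G.qv (2 * n + δ) x y) Filter.atTop
        (nhds (2 * (G.deg y : ℝ) / (Fintype.card G.E : ℝ))) :=
  nbrw_limit_bipartite_general G hconn hdeg hbip
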